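/- arXiv:2303.01667 — 3 statements merged into one kernel-verified Lean document; each statement's English description precedes it below -/
import Mathlib

section
/- Upon termination of the Bellman-Ford algorithm with multiple source centers, every node i with finite distance satisfies d_i equal to the shortest-path distance from i to its nearest center, and m_i is the index of a center achieving that shortest distance. -/
open scoped ENNReal

/-- `l` is a walk from `i` to `j` in the weighted graph with edges `{(a,b) | 0 < W a b}`. -/
def IsWalk {N : ℕ} (W : Fin N → Fin N → ℝ≥0∞) (i j : Fin N) (l : List (Fin N)) : Prop :=
  l.head? = some i ∧ l.getLast? = some j ∧ l.Chain' (fun a b => 0 < W a b)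

/-- Total weight of a walk. -/
noncomputable def walkCost {N : ℕ} (W : Fin N → Fin N → ℝ≥0∞) : List (Fin N) → ℝ≥0∞
  | [] => 0
  | [_] => 0
  | i :: j :: rest => W i j + walkCost W (j :: rest)

/-- Shortest-path distance from `i` to `j`. -/
noncomputable def spdist {N : ℕ} (W : Fin N → Fin N → ℝ≥0∞) (i j : Fin N) : ℝ≥0∞ :=
  sInf {x | ∃ l, IsWalk W i j l ∧ walkCost W l = x}

lemma walkCost_concat {N : ℕ} (W : Fin N → Fin N → ℝ≥0∞) :
    ∀ (l : List (Fin N)) (i j : Fin N), l.getLast? = some i →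
      walkCost W (l ++ [j]) = walkCost W l + W i j := by
  intro l
  induction l with
  | nil => intro i j h; simp at h
  | cons x rest ih =>
    intro i j hl
    cases rest with
    | nil =>
      simp only [List.getLast?_singleton, Option.some.injEq] at hl
      subst hl
      simp [walkCost]
    | cons y rest' =>
      rw [List.getLast?_cons_cons] at hl
      have h2 := ih i j hl
      simp only [List.cons_append] at *
      simp only [walkCost]
      rw [h2, add_assoc]

/-- Upon termination of multi-source Bellman-Ford, every node with finite distance label
has `d i` equal to the shortest-path distance from its nearest center, and `m i` indexes
a center achieving that distance. -/
theorem bellman_ford_correct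
    (N k : ℕ) (W : Fin N → Fin N → ℝ≥0∞) (c : Fin k → Fin N)
    (T : ℕ) (d : ℕ → Fin N → ℝ≥0∞) (m : ℕ → Fin N → Fin k)
    (hinit0 : ∀ a, d 0 (c a) = 0)
    (hinit1 : ∀ i, (∀ a, c a ≠ i) → d 0 i = ⊤)
    (hinitm : ∀ a, m 0 (c a) = a)
    (hstep : ∀ t < T, ∃ i j : Fin N, 0 < W i j ∧ d t i + W i j < d t j ∧
        d (t + 1) = Function.update (d t) j (d t i + W i j) ∧
        m (t + 1) = Function.update (m t) j (m t i))
    (hterm : ∀ i j : Fin N, 0 < W i j → ¬(d T i + W i j < d T j)) :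
    ∀ i : Fin N, d T i < ⊤ →
      d T i = ⨅ a : Fin k, spdist W (c a) i ∧
      d T i = spdist W (c (m T i)) i := by
  -- invariant: finite labels are witnessed by walks
  have inv : ∀ t, t ≤ T → ∀ i, d t i < ⊤ →
      ∃ l, IsWalk W (c (m t i)) i l ∧ walkCost W l = d t i := by
    intro t
    induction t with
    | zero =>
      intro _ i hfin
      by_cases h : ∃ a, c a = i
      · obtain ⟨a, ha⟩ := h
        subst ha
        rw [hinitm a, hinit0 a]
        exact ⟨[c a], ⟨rfl, rfl, List.isChain_singleton _⟩, rfl⟩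
      · push_neg at h
        rw [hinit1 i h] at hfin
        exact absurd hfin (lt_irrefl _)
    | succ t ih =>
      intro ht i hfin
      have htT : t < T := Nat.lt_of_succ_le ht
      obtain ⟨i0, j0, hW, hlt, hd, hm⟩ := hstep t htT
      by_cases hij : i = j0
      · subst hij
        have hdi : d (t+1) i = d t i0 + W i0 i := by rw [hd, Function.update_self]
        have hmi : m (t+1) i = m t i0 := by rw [hm, Function.update_self]
        have hfin0 : d t i0 < ⊤ := by
          have : d t i0 ≤ d t i0 + W i0 i := le_self_add
          exact lt_of_le_of_lt this (lt_of_lt_of_le hlt le_top)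
        obtain ⟨l, ⟨hh, hg, hc⟩, hcost⟩ := ih (le_of_lt htT) i0 hfin0
        rw [hmi, hdi]
        refine ⟨l ++ [i], ⟨?_, ?_, ?_⟩, ?_⟩
        · cases l with
          | nil => simp at hh
          | cons x rest => simpa using hh
        · simp
        · rw [List.Chain', List.isChain_append]
          refine ⟨hc, List.isChain_singleton _, ?_⟩
          intro x hx y hy
          simp only [List.head?_cons, Option.mem_def, Option.some.injEq] at hy
          rw [Option.mem_def, hg] at hx
          injection hx with hx
          subst hx; subst hy
          exact hW
        · rw [walkCost_concat W l i0 i hg, hcost]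
      · have hdi : d (t+1) i = d t i := by rw [hd, Function.update_of_ne hij]
        have hmi : m (t+1) i = m t i := by rw [hm, Function.update_of_ne hij]
        rw [hdi, hmi]
        exact ih (le_of_lt htT) i (hdi ▸ hfin)
  -- d is pointwise non-increasing in t
  have dmono : ∀ t, t ≤ T → ∀ i, d t i ≤ d 0 i := by
    intro t
    induction t with
    | zero => intro _ i; exact le_refl _
    | succ t ih =>
      intro ht i
      have htT : t < T := Nat.lt_of_succ_le ht
      obtain ⟨i0, j0, hW, hlt, hd, _⟩ := hstep t htT
      by_cases hij : i = j0
      · subst hij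
        have : d (t+1) i = d t i0 + W i0 i := by rw [hd, Function.update_self]
        rw [this]
        exact le_trans (le_of_lt hlt) (ih (le_of_lt htT) i)
      · rw [hd, Function.update_of_ne hij]
        exact ih (le_of_lt htT) i
  have hcz : ∀ a, d T (c a) = 0 := by
    intro a
    have := dmono T (le_refl T) (c a)
    rw [hinit0 a] at this
    exact le_antisymm this zero_le
  -- lower bound along walks
  have lb : ∀ l : List (Fin N), l.Chain' (fun a b => 0 < W a b) →
      ∀ x y : Fin N, l.head? = some x → l.getLast? = some y →
        d T y ≤ d T x + walkCost W l := by
    intro l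
    induction l with
    | nil => intro _ x y h; simp at h
    | cons a rest ih =>
      intro hc x y hh hg
      simp only [List.head?_cons, Option.some.injEq] at hh
      subst hh
      cases rest with
      | nil =>
        simp only [List.getLast?_singleton, Option.some.injEq] at hg
        subst hg
        simp [walkCost]
      | cons b rest' =>
        rw [List.Chain', List.isChain_cons_cons] at hc
        obtain ⟨hab, hc'⟩ := hc
        rw [List.getLast?_cons_cons] at hg
        have h1 := ih hc' b y rfl hg
        have h2 : d T b ≤ d T a + W a b := not_lt.mp (hterm a b hab)
        calc d T y ≤ d T b + walkCost W (b :: rest') := h1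
          _ ≤ (d T a + W a b) + walkCost W (b :: rest') := add_le_add_left h2 _
          _ = d T a + walkCost W (a :: b :: rest') := by rw [walkCost, add_assoc]
  have lbsp : ∀ (a : Fin k) (i : Fin N), d T i ≤ spdist W (c a) i := by
    intro a i
    apply le_sInf
    rintro x ⟨l, ⟨hh, hg, hc⟩, rfl⟩
    have := lb l hc (c a) i hh hg
    rwa [hcz a, zero_add] at this
  intro i hfin
  obtain ⟨l, hwalk, hcost⟩ := inv T (le_refl T) i hfin
  have hub : spdist W (c (m T i)) i ≤ d T i := sInf_le ⟨l, hwalk, hcost⟩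
  have heq : d T i = spdist W (c (m T i)) i := le_antisymm (lbsp _ i) hub
  refine ⟨le_antisymm (le_iInf fun a => lbsp a i) ?_, heq⟩
  exact iInf_le_of_le (m T i) (heq ▸ le_refl _)
end

section
/- The clusters produced by the multi-source Bellman-Ford algorithm are connected: for every pair of nodes i, j assigned to the same cluster a, there is a path from i to j in the graph all of whose intermediate nodes are also assigned to cluster a. In particular, each node is connected to its cluster's center within the cluster. -/
open scoped ENNReal

private lemma bf_aux {N k : ℕ} (W : Fin N → Fin N → ℝ≥0∞) (c : Fin k → Fin N)
    (d : Fin N → ℝ≥0∞) (m : Fin N → Fin k) (p : Fin N → Fin N)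
    (hfin : ∀ i, d i ≠ ⊤)
    (hcenter : ∀ a, m (c a) = a ∧ d (c a) = 0 ∧ p (c a) = c a)
    (hpred : ∀ j, (∀ a, c a ≠ j) →
      0 < W (p j) j ∧ d j = d (p j) + W (p j) j ∧ m j = m (p j)) :
    ∀ n (j : Fin N), (Finset.univ.filter fun x => d x < d j).card ≤ n →
      ∃ l : List (Fin N), l.head? = some j ∧ l.getLast? = some (c (m j)) ∧
        l.Chain' (fun x y => 0 < W x y ∨ 0 < W y x) ∧ ∀ x ∈ l, m x = m j := by
  intro n
  induction n with
  | zero =>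
    intro j hn
    by_cases hc : ∃ a, c a = j
    · obtain ⟨a, rfl⟩ := hc
      refine ⟨[c a], rfl, ?_, List.isChain_singleton _, by simp⟩
      simp [(hcenter a).1]
    · push_neg at hc
      obtain ⟨hW, hd, hm⟩ := hpred j hc
      have hdp : d (p j) < d j := by
        have h1 : d (p j) ≠ ⊤ := fun h => hfin j (by rw [hd, h]; simp)
        rw [hd]; exact ENNReal.lt_add_right h1 (ne_of_gt hW)
      have : 0 < (Finset.univ.filter fun x => d x < d j).card :=
        Finset.card_pos.mpr ⟨p j, by simp [hdp]⟩
      omega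
  | succ n ih =>
    intro j hn
    by_cases hc : ∃ a, c a = j
    · obtain ⟨a, rfl⟩ := hc
      refine ⟨[c a], rfl, ?_, List.isChain_singleton _, by simp⟩
      simp [(hcenter a).1]
    · push_neg at hc
      obtain ⟨hW, hd, hm⟩ := hpred j hc
      have hdp : d (p j) < d j := by
        have h1 : d (p j) ≠ ⊤ := fun h => hfin j (by rw [hd, h]; simp)
        rw [hd]; exact ENNReal.lt_add_right h1 (ne_of_gt hW)
      have hss : (Finset.univ.filter fun x => d x < d (p j)) ⊂
          (Finset.univ.filter fun x => d x < d j) := by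
        constructor
        · intro x hx
          simp only [Finset.mem_filter] at *
          exact ⟨hx.1, hx.2.trans hdp⟩
        · intro h
          have := h (by simp [hdp] : p j ∈ _)
          simp at this
      have hcard := Finset.card_lt_card hss
      obtain ⟨l', hh, hl, hch, hmem⟩ := ih (p j) (by omega)
      cases l' with
      | nil => simp at hh
      | cons b t =>
        have hb : b = p j := by simpa using hh
        refine ⟨j :: b :: t, rfl, ?_, ?_, ?_⟩
        · rw [List.getLast?_cons_cons, hl, hm]
        · exact List.IsChain.cons_cons (by rw [hb]; exact Or.inr hW) hch
        · intro x hx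
          rcases List.mem_cons.mp hx with rfl | hx
          · rfl
          · rw [hmem x hx, hm]

/-- The clusters produced by multi-source Bellman-Ford are connected: any two nodes of the
same cluster are joined by a path all of whose nodes lie in that cluster.  The hypotheses
encode the state at termination: each center has distance 0 and is its own predecessor,
and every non-center node `j` has a predecessor `p j` across an edge with
`d j = d (p j) + W (p j) j` and the same membership. -/
theorem bellman_ford_clusters_connected
    (N k : ℕ) (W : Fin N → Fin N → ℝ≥0∞) (c : Fin k → Fin N)
    (d : Fin N → ℝ≥0∞) (m : Fin N → Fin k) (p : Fin N → Fin N)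
    (hfin : ∀ i, d i ≠ ⊤)
    (hcenter : ∀ a, m (c a) = a ∧ d (c a) = 0 ∧ p (c a) = c a)
    (hpred : ∀ j, (∀ a, c a ≠ j) →
      0 < W (p j) j ∧ d j = d (p j) + W (p j) j ∧ m j = m (p j)) :
    ∀ i j : Fin N, m i = m j →
      ∃ l : List (Fin N), l.head? = some i ∧ l.getLast? = some j ∧
        l.Chain' (fun x y => 0 < W x y ∨ 0 < W y x) ∧ ∀ x ∈ l, m x = m i := by
  intro i j hij
  obtain ⟨l1, h1h, h1l, h1c, h1m⟩ := bf_aux W c d m p hfin hcenter hpred _ i le_rfl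
  obtain ⟨l2, h2h, h2l, h2c, h2m⟩ := bf_aux W c d m p hfin hcenter hpred _ j le_rfl
  -- reverse l2
  set R : Fin N → Fin N → Prop := fun x y => 0 < W x y ∨ 0 < W y x with hR
  have h2cr : l2.reverse.Chain' R := by
    show List.IsChain R _
    rw [List.isChain_reverse]
    exact h2c.imp (fun x y h => h.symm)
  have h2hr : l2.reverse.head? = some (c (m j)) := by
    rw [List.head?_reverse, h2l]
  have h2lr : l2.reverse.getLast? = some j := by
    rw [List.getLast?_reverse, h2h]
  cases hrev : l2.reverse with
  | nil => rw [hrev] at h2hr; simp at h2hr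
  | cons b t =>
    rw [hrev] at h2cr h2hr h2lr
    have hb : b = c (m j) := by simpa using h2hr
    cases l1 with
    | nil => simp at h1h
    | cons a s =>
      have ha : a = i := by simpa using h1h
      subst ha hb
      refine ⟨(a :: s) ++ t, by simp, ?_, ?_, ?_⟩
      · cases t with
        | nil =>
          simp only [List.append_nil]
          rw [h1l, hij]
          simpa using h2lr
        | cons u v =>
          have huv : (u :: v).getLast? = some j := by
            rwa [List.getLast?_cons_cons] at h2lr
          rw [List.getLast?_append, huv]
          rfl
      · show List.IsChain R _
        rw [List.isChain_append]
        refine ⟨h1c, h2cr.tail, ?_⟩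
        intro x hx y hy
        rw [h1l] at hx
        have hx2 : c (m a) = x := by simpa using hx
        subst hx2
        have := (List.isChain_cons.mp h2cr).1 y hy
        rwa [hij]
      · intro x hx
        rcases List.mem_append.mp hx with hx | hx
        · exact h1m x hx
        · have : x ∈ l2 := by
            have : x ∈ l2.reverse := by rw [hrev]; exact List.mem_cons_of_mem _ hx
            simpa using this
          rw [h2m x this, ← hij]
end

section
/- The balanced Bellman-Ford algorithm terminates: each iteration either strictly decreases some distance d_j (by at least the minimum weight gap) or, keeping all distances fixed, strictly decreases the sum of squared cluster sizes; since the modified energy H_δ = Σ_i d_i² + δ Σ_a s_a² is nonnegative and takes only finitely many values, only finitely many updating steps can occur. -/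
/-!
Along any run, every distance is a starting distance plus a finite sum of edge weights. By
Higman's lemma, the sums of finitely many nonnegative reals form a partially well-ordered set,
and so do the attainable distances. The distance vector only decreases, so by Dickson's lemma it
is eventually constant; from then on every step is a cluster move, which strictly decreases the
sum of squared cluster sizes, a natural number.
-/

open scoped ENNReal NNReal
open Finset Function

theorem Set.IsPWO.antitone_chain_condition {α : Type*} [PartialOrder α] {s : Set α}
    (hs : s.IsPWO) {f : ℕ → α} (hf : Antitone f) (hfs : ∀ n, f n ∈ s) :
    ∃ n, ∀ m, n ≤ m → f n = f m := by
  obtain ⟨g, hg⟩ := Set.isPWO_iff_exists_monotone_subseq.mp hs f hfs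
  refine ⟨g 0, fun m hm => le_antisymm ?_ (hf hm)⟩
  calc f (g 0) ≤ f (g m) := hg (Nat.zero_le m)
    _ ≤ f m := hf (g.strictMono.id_le m)

section ClusterEnergy

variable {α β : Type*} [Fintype α] [DecidableEq α] [DecidableEq β]

def clusterSize (m : α → β) (b : β) : ℕ := #{x | m x = b}

def clusterEnergy [Fintype β] (m : α → β) : ℕ := ∑ b, clusterSize m b ^ 2

lemma clusterSize_update_self {m : α → β} {j : α} {b : β} (hb : m j ≠ b) :
    clusterSize (update m j b) b = clusterSize m b + 1 := by
  have : univ.filter (update m j b · = b) = insert j (univ.filter (m · = b)) := by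
    ext x
    rcases eq_or_ne x j with rfl | hx <;> simp [*]
  rw [clusterSize, this, card_insert_of_notMem (by simpa using hb), clusterSize]

lemma clusterSize_update_apply_self {m : α → β} {j : α} {b : β} (hb : m j ≠ b) :
    clusterSize (update m j b) (m j) + 1 = clusterSize m (m j) := by
  have : univ.filter (update m j b · = m j) = (univ.filter (m · = m j)).erase j := by
    ext x
    rcases eq_or_ne x j with rfl | hx <;> simp [*, Ne.symm hb]
  rw [clusterSize, this, card_erase_add_one (by simp), clusterSize]

lemma clusterSize_update_of_ne {m : α → β} {j : α} {b c : β} (hcb : c ≠ b) (hcj : c ≠ m j) :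
    clusterSize (update m j b) c = clusterSize m c := by
  unfold clusterSize
  congr 1
  ext x
  rcases eq_or_ne x j with rfl | hx <;> simp [*, Ne.symm hcb, Ne.symm hcj]

lemma clusterEnergy_update_lt [Fintype β] {m : α → β} {i j : α} (hij : m i ≠ m j)
    (hsize : clusterSize m (m i) + 1 < clusterSize m (m j)) :
    clusterEnergy (update m j (m i)) < clusterEnergy m := by
  have hj : m j ∈ (univ : Finset β).erase (m i) := mem_erase.mpr ⟨hij.symm, mem_univ _⟩
  have split : ∀ g : β → ℕ, ∑ b, g b =
      g (m i) + (g (m j) + ∑ b ∈ ((univ : Finset β).erase (m i)).erase (m j), g b) := by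
    intro g
    rw [add_sum_erase _ _ hj, add_sum_erase _ _ (mem_univ _)]
  have rest : ∀ b ∈ ((univ : Finset β).erase (m i)).erase (m j),
      clusterSize (update m j (m i)) b ^ 2 = clusterSize m b ^ 2 := by
    intro b hb
    obtain ⟨hbj, hbi⟩ := mem_erase.mp hb
    rw [clusterSize_update_of_ne (mem_erase.mp hbi).1 hbj]
  unfold clusterEnergy
  rw [split, split, sum_congr rfl rest, clusterSize_update_self (Ne.symm hij)]
  have := clusterSize_update_apply_self (Ne.symm hij)
  -- with `a, b` the old sizes of the target and source clusters, the energy drops by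
  -- `2 * (b - a - 1) > 0`
  nlinarith

end ClusterEnergy

namespace BalancedBellmanFord

variable {V κ : Type*} (W : V → V → ℝ≥0∞)

def Step [Fintype V] [DecidableEq V] [DecidableEq κ]
    (d : V → ℝ≥0∞) (m : V → κ) (d' : V → ℝ≥0∞) (m' : V → κ) : Prop :=
  ∃ i j, 0 < W i j ∧
    ((d i + W i j < d j ∧ d' = update d j (d i + W i j) ∧ m' = update m j (m i)) ∨
     (d i + W i j = d j ∧ m i ≠ m j ∧ clusterSize m (m i) + 1 < clusterSize m (m j) ∧
       d' = d ∧ m' = update m j (m i)))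

/-- `toNNReal` sends an infinite weight to `0`; this is harmless, since an infinite edge never
relaxes a distance. -/
def reachable (d₀ : V → ℝ≥0∞) : Set ℝ≥0∞ :=
  Set.image2 (· + ·) (Set.range d₀)
    ((↑) '' (AddSubmonoid.closure (Set.range fun e : V × V => (W e.1 e.2).toNNReal) : Set ℝ≥0))

variable {W}

lemma isPWO_reachable [Finite V] (d₀ : V → ℝ≥0∞) : (reachable W d₀).IsPWO := by
  have weightSums := (Set.IsPWO.addSubmonoid_closure (fun _ _ => zero_le)
    (Set.finite_range fun e : V × V => (W e.1 e.2).toNNReal).isPWO).image_of_monotone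
    ENNReal.coe_mono
  rw [reachable, ← Set.image_prod]
  exact ((Set.finite_range d₀).isPWO.prod weightSums).image_of_monotone
    fun _ _ h => add_le_add h.1 h.2

lemma apply_mem_reachable (d₀ : V → ℝ≥0∞) (x : V) : d₀ x ∈ reachable W d₀ :=
  ⟨d₀ x, ⟨x, rfl⟩, 0, ⟨0, zero_mem _, rfl⟩, add_zero _⟩

lemma add_mem_reachable {d₀ : V → ℝ≥0∞} {a : ℝ≥0∞} (ha : a ∈ reachable W d₀) {i j : V}
    (hW : W i j ≠ ⊤) : a + W i j ∈ reachable W d₀ := by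
  obtain ⟨_, ⟨y, rfl⟩, _, ⟨c, hc, rfl⟩, rfl⟩ := ha
  refine ⟨d₀ y, ⟨y, rfl⟩, _, ⟨c + (W i j).toNNReal, add_mem hc
    (AddSubmonoid.subset_closure ⟨(i, j), rfl⟩), rfl⟩, ?_⟩
  rw [ENNReal.coe_add, ENNReal.coe_toNNReal hW, add_assoc]

namespace Step

variable [Fintype V] [DecidableEq V] [DecidableEq κ] {d d' d₀ : V → ℝ≥0∞} {m m' : V → κ}

lemma dist_le (h : Step W d m d' m') : d' ≤ d := by
  obtain ⟨i, j, -, ⟨hlt, rfl, -⟩ | ⟨-, -, -, rfl, -⟩⟩ := h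
  · exact update_le_iff.mpr ⟨hlt.le, fun _ _ => le_rfl⟩
  · exact le_rfl

lemma mem_reachable (h : Step W d m d' m') (hd : ∀ x, d x ∈ reachable W d₀) (x : V) :
    d' x ∈ reachable W d₀ := by
  obtain ⟨i, j, -, ⟨hlt, rfl, -⟩ | ⟨-, -, -, rfl, -⟩⟩ := h
  · rcases eq_or_ne x j with rfl | hx
    · rw [update_self]
      exact add_mem_reachable (hd i) (ENNReal.add_ne_top.mp hlt.ne_top).2
    · rw [update_of_ne hx]
      exact hd x
  · exact hd x

lemma clusterEnergy_lt [Fintype κ] (h : Step W d m d' m') (hd : d' = d) :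
    clusterEnergy m' < clusterEnergy m := by
  obtain ⟨i, j, -, ⟨hlt, rfl, -⟩ | ⟨-, hij, hsize, -, rfl⟩⟩ := h
  · exact absurd (by simpa using congrFun hd j) hlt.ne
  · exact clusterEnergy_update_lt hij hsize

end Step

end BalancedBellmanFord

open BalancedBellmanFord in
/-- The balanced Bellman-Ford algorithm terminates: there is no infinite sequence of states
in which each step either (i) strictly decreases some distance `d j` via an edge relaxation,
or (ii) keeps all distances fixed and, on an exact tie `d i + W i j = d j`, moves node `j`
to node `i`'s cluster when that cluster is smaller by at least 2 (which strictly decreases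
the sum of squared cluster sizes). -/
theorem balanced_bellman_ford_terminates
    (N k : ℕ) (W : Fin N → Fin N → ℝ≥0∞) :
    ¬∃ (d : ℕ → Fin N → ℝ≥0∞) (m : ℕ → Fin N → Fin k),
      ∀ t : ℕ, ∃ i j : Fin N, 0 < W i j ∧
        ((d t i + W i j < d t j ∧
          d (t + 1) = Function.update (d t) j (d t i + W i j) ∧
          m (t + 1) = Function.update (m t) j (m t i)) ∨
         (d t i + W i j = d t j ∧ m t i ≠ m t j ∧
          (Finset.univ.filter (fun x => m t x = m t i)).card + 1
            < (Finset.univ.filter (fun x => m t x = m t j)).card ∧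
          d (t + 1) = d t ∧
          m (t + 1) = Function.update (m t) j (m t i))) := by
  rintro ⟨d, m, step⟩
  have reach : ∀ t x, d t x ∈ reachable W (d 0) := by
    intro t
    induction t with
    | zero => exact apply_mem_reachable (d 0)
    | succ t ih => exact Step.mem_reachable (step t) ih
  obtain ⟨T, hT⟩ := (Set.IsPWO.pi fun _ => isPWO_reachable (d 0)).antitone_chain_condition
    (antitone_nat_of_succ_le fun t => Step.dist_le (step t)) fun t x _ => reach t x
  refine not_strictAnti_of_wellFoundedLT (fun n => clusterEnergy (m (T + n)))
    (strictAnti_nat_of_succ_lt fun n => Step.clusterEnergy_lt (step (T + n)) ?_)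
  rw [← hT (T + n) (by omega), ← hT (T + n + 1) (by omega)]
end
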